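/- Let (Ω, Σ, μ) be a non-atomic σ-finite measure space and Φ₁, Φ₂ Young functions. Then there is no nonzero compact multiplication operator from L^{Φ₁}(μ) to L^{Φ₂}(μ): if u: Ω → ℂ is measurable and M_u: L^{Φ₁}(μ) → L^{Φ₂}(μ) is bounded and compact, then u = 0 μ-a.e. -/

import Mathlib

open MeasureTheory Filter Set
open scoped ENNReal

/-- A Young function: continuous, convex on `[0,∞)`, nonnegative, vanishing exactly at `0`,
tending to `∞` and superlinear at `∞`. -/
def IsYoung (Φ : ℝ → ℝ) : Prop :=
  Continuous Φ ∧ ConvexOn ℝ (Ici 0) Φ ∧ (∀ x, 0 ≤ Φ x) ∧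
  (∀ x, 0 ≤ x → (Φ x = 0 ↔ x = 0)) ∧
  Tendsto Φ atTop atTop ∧ Tendsto (fun x => Φ x / x) atTop atTop

/-- The Orlicz modular `∫ Φ(|f|) dμ` (as an extended real). -/
noncomputable def orliczModular {Ω : Type*} [MeasurableSpace Ω] (Φ : ℝ → ℝ)
    (μ : Measure Ω) (f : Ω → ℂ) : ℝ≥0∞ :=
  ∫⁻ x, ENNReal.ofReal (Φ ‖f x‖) ∂μ

/-- Membership in the Orlicz space `L^Φ(μ)`. -/
def MemOrlicz {Ω : Type*} [MeasurableSpace Ω] (Φ : ℝ → ℝ) (μ : Measure Ω)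
    (f : Ω → ℂ) : Prop :=
  Measurable f ∧ ∃ k : ℝ, 0 < k ∧ orliczModular Φ μ (fun x => (k : ℂ) * f x) < ⊤

/-- The Luxemburg norm `N_Φ(f) = inf {k > 0 : ∫ Φ(|f|/k) dμ ≤ 1}`. -/
noncomputable def luxNorm {Ω : Type*} [MeasurableSpace Ω] (Φ : ℝ → ℝ)
    (μ : Measure Ω) (f : Ω → ℂ) : ℝ :=
  sInf {k : ℝ | 0 < k ∧ orliczModular Φ μ (fun x => f x / (k : ℂ)) ≤ 1}

/-- An atom of the measure `μ`. -/
def IsMeasAtom {Ω : Type*} [MeasurableSpace Ω] (μ : Measure Ω) (A : Set Ω) : Prop :=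
  MeasurableSet A ∧ 0 < μ A ∧ ∀ F, F ⊆ A → MeasurableSet F → μ F = 0 ∨ μ F = μ A

/-- `N` is a union of finitely many atoms of `μ`. -/
def FinUnionAtoms {Ω : Type*} [MeasurableSpace Ω] (μ : Measure Ω) (N : Set Ω) : Prop :=
  ∃ (n : ℕ) (C : Fin n → Set Ω), (∀ i, IsMeasAtom μ (C i)) ∧ N = ⋃ i, C i

/-- Sequential compactness of an operator `T` between the Orlicz spaces
`L^{Φ₁}(μ)` and `L^{Φ₂}(μ)`: the image of the unit ball is totally bounded,
expressed via extraction of Cauchy subsequences. -/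
def CompactOp {Ω : Type*} [MeasurableSpace Ω] (Φ₁ Φ₂ : ℝ → ℝ) (μ : Measure Ω)
    (T : (Ω → ℂ) → (Ω → ℂ)) : Prop :=
  ∀ f : ℕ → Ω → ℂ, (∀ n, MemOrlicz Φ₁ μ (f n) ∧ luxNorm Φ₁ μ (f n) ≤ 1) →
    ∃ g : ℕ → ℕ, StrictMono g ∧
      ∀ ε : ℝ, 0 < ε → ∃ N : ℕ, ∀ m, N ≤ m → ∀ n, N ≤ n →
        luxNorm Φ₂ μ (fun x => T (f (g m)) x - T (f (g n)) x) ≤ ε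

section Stmt11Aux


lemma young_zero {Φ : ℝ → ℝ} (h : IsYoung Φ) : Φ 0 = 0 :=
  (h.2.2.2.1 0 le_rfl).mpr rfl

lemma young_scale {Φ : ℝ → ℝ} (h : IsYoung Φ) {t x : ℝ} (ht0 : 0 ≤ t) (ht1 : t ≤ 1)
    (hx : 0 ≤ x) : Φ (t * x) ≤ t * Φ x := by
  have hco := h.2.1.2 (mem_Ici.mpr hx) (mem_Ici.mpr (le_refl (0:ℝ)))
      ht0 (sub_nonneg.mpr ht1) (by ring : t + (1 - t) = 1)
  simp only [smul_eq_mul, mul_zero, add_zero] at hco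
  calc Φ (t * x) ≤ t * Φ x + (1 - t) * Φ 0 := hco
    _ = t * Φ x := by rw [young_zero h]; ring

lemma young_mono {Φ : ℝ → ℝ} (h : IsYoung Φ) {x y : ℝ} (hx : 0 ≤ x) (hxy : x ≤ y) :
    Φ x ≤ Φ y := by
  rcases eq_or_lt_of_le hxy with rfl | hlt
  · exact le_rfl
  have hy : 0 < y := lt_of_le_of_lt hx hlt
  have h1 : x = (x / y) * y := by field_simp
  calc Φ x = Φ ((x/y) * y) := by rw [← h1]
    _ ≤ (x/y) * Φ y := young_scale h (div_nonneg hx hy.le) (by rw [div_le_one hy]; exact hxy) hy.le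
    _ ≤ 1 * Φ y := by
        apply mul_le_mul_of_nonneg_right _ (h.2.2.1 y)
        rw [div_le_one hy]; exact hxy
    _ = Φ y := one_mul _

lemma young_small {Φ : ℝ → ℝ} (h : IsYoung Φ) {r : ℝ} (hr : 0 < r) :
    ∃ c : ℝ, 0 < c ∧ Φ c ≤ r := by
  have h0 : Tendsto Φ (nhds 0) (nhds 0) := by
    have := h.1.tendsto 0
    rwa [young_zero h] at this
  have := h0 (Iio_mem_nhds hr)
  rw [Filter.mem_map, Metric.mem_nhds_iff] at this
  obtain ⟨ε, hε, hball⟩ := this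
  refine ⟨ε/2, by linarith, ?_⟩
  have : (ε/2 : ℝ) ∈ Metric.ball (0:ℝ) ε := by
    rw [Metric.mem_ball, Real.dist_eq, sub_zero, abs_of_pos (by linarith : (0:ℝ) < ε/2)]
    linarith
  exact (hball this).le

lemma young_big {Φ : ℝ → ℝ} (h : IsYoung Φ) (r : ℝ) :
    ∃ M : ℝ, 0 < M ∧ ∀ x, M ≤ x → r < Φ x := by
  have := (h.2.2.2.2.1).eventually_gt_atTop r
  rw [eventually_atTop] at this
  obtain ⟨M, hM⟩ := this
  exact ⟨max M 1, lt_of_lt_of_le one_pos (le_max_right _ _),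
    fun x hx => hM x (le_trans (le_max_left _ _) hx)⟩

variable {Ω : Type*} [MeasurableSpace Ω] {μ : Measure Ω}

lemma split_basic (hna : ∀ A : Set Ω, ¬ IsMeasAtom μ A) {s : Set Ω}
    (hs : MeasurableSet s) (h0 : μ s ≠ 0) :
    ∃ F, F ⊆ s ∧ MeasurableSet F ∧ 0 < μ F ∧ μ F < μ s := by
  have h := hna s
  rw [IsMeasAtom] at h
  push_neg at h
  obtain ⟨F, hFs, hF, hF0, hFne⟩ := h hs (pos_iff_ne_zero.mpr h0)
  exact ⟨F, hFs, hF, pos_iff_ne_zero.mpr hF0, lt_of_le_of_ne (measure_mono hFs) hFne⟩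

lemma split_pos (hna : ∀ A : Set Ω, ¬ IsMeasAtom μ A) {s : Set Ω}
    (hs : MeasurableSet s) (h0 : μ s ≠ 0) (hfin : μ s ≠ ⊤) :
    ∃ F, F ⊆ s ∧ MeasurableSet F ∧ 0 < μ F ∧ μ F ≤ μ s / 2 := by
  obtain ⟨F, hFs, hF, hF0, hFlt⟩ := split_basic hna hs h0
  have hdiff : μ (s \ F) = μ s - μ F :=
    measure_diff hFs hF.nullMeasurableSet (ne_top_of_lt hFlt)
  rcases le_or_gt (μ F) (μ s / 2) with hle | hgt
  · exact ⟨F, hFs, hF, hF0, hle⟩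
  · refine ⟨s \ F, diff_subset, hs.diff hF, ?_, ?_⟩
    · rw [hdiff]
      exact tsub_pos_iff_lt.mpr hFlt
    · rw [hdiff]
      calc μ s - μ F ≤ μ s - μ s / 2 := tsub_le_tsub_left hgt.le _
        _ = μ s / 2 := ENNReal.sub_half hfin

lemma exists_small (hna : ∀ A : Set Ω, ¬ IsMeasAtom μ A) {s : Set Ω}
    (hs : MeasurableSet s) (h0 : μ s ≠ 0) (hfin : μ s ≠ ⊤) {ε : ℝ≥0∞} (hε : 0 < ε) :
    ∃ F, F ⊆ s ∧ MeasurableSet F ∧ 0 < μ F ∧ μ F ≤ ε := by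
  have key : ∀ n : ℕ, ∃ F, F ⊆ s ∧ MeasurableSet F ∧ 0 < μ F ∧ μ F ≤ μ s * 2⁻¹ ^ n := by
    intro n
    induction n with
    | zero => exact ⟨s, subset_rfl, hs, pos_iff_ne_zero.mpr h0, by simp⟩
    | succ n ih =>
      obtain ⟨F, hFs, hF, hF0, hFle⟩ := ih
      have hFfin : μ F ≠ ⊤ := ne_top_of_le_ne_top hfin (measure_mono hFs)
      obtain ⟨G, hGF, hG, hG0, hGle⟩ := split_pos hna hF hF0.ne' hFfin
      refine ⟨G, hGF.trans hFs, hG, hG0, ?_⟩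
      calc μ G ≤ μ F / 2 := hGle
        _ ≤ μ s * 2⁻¹ ^ n / 2 := by exact ENNReal.div_le_div_right hFle 2
        _ = μ s * 2⁻¹ ^ (n + 1) := by
            rw [pow_succ, div_eq_mul_inv, mul_assoc]
  have htend : Tendsto (fun n : ℕ => μ s * 2⁻¹ ^ n) atTop (nhds 0) := by
    have h2 : Tendsto (fun n : ℕ => (2⁻¹ : ℝ≥0∞) ^ n) atTop (nhds 0) :=
      ENNReal.tendsto_pow_atTop_nhds_zero_of_lt_one (by simp [ENNReal.inv_lt_one])
    have := ENNReal.Tendsto.const_mul h2 (Or.inr hfin)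
    simpa using this
  have hev : ∀ᶠ n : ℕ in atTop, μ s * 2⁻¹ ^ n < ε :=
    htend.eventually_lt_const hε
  obtain ⟨n, hn⟩ := hev.exists
  obtain ⟨F, hFs, hF, hF0, hFle⟩ := key n
  exact ⟨F, hFs, hF, hF0, hFle.trans hn.le⟩


lemma split_third (hna : ∀ A : Set Ω, ¬ IsMeasAtom μ A) {s : Set Ω}
    (hs : MeasurableSet s) (h0 : μ s ≠ 0) (hfin : μ s ≠ ⊤) :
    ∃ B, B ⊆ s ∧ MeasurableSet B ∧ μ s / 3 ≤ μ B ∧ μ s / 3 ≤ μ (s \ B) := by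
  by_contra hcon
  push_neg at hcon
  set m := μ s with hm
  set th := m / 3 with hth
  have h3ne : (3 : ℝ≥0∞) ≠ 0 := by norm_num
  have h3nt : (3 : ℝ≥0∞) ≠ ⊤ := by norm_num
  have hth_pos : 0 < th := ENNReal.div_pos h0 h3nt
  have hth_fin : th ≠ ⊤ := by
    simp only [hth]
    exact (ENNReal.div_lt_top hfin h3ne).ne
  have hm3 : th + th + th = m := by
    rw [hth, ENNReal.div_add_div_same, ENNReal.div_add_div_same]
    have : m + m + m = 3 * m := by ring
    rw [this, mul_comm, mul_div_assoc, ENNReal.div_self h3ne h3nt, mul_one]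
  -- dichotomy
  have dich : ∀ B, B ⊆ s → MeasurableSet B → μ B < th ∨ th + th < μ B := by
    intro B hBs hB
    rcases lt_or_ge (μ B) th with h | h
    · exact Or.inl h
    · right
      have hd := hcon B hBs hB h
      have hdiff : μ (s \ B) = m - μ B :=
        measure_diff hBs hB.nullMeasurableSet (ne_top_of_le_ne_top hfin (measure_mono hBs))
      rw [hdiff] at hd
      have hBm : μ B ≤ m := measure_mono hBs
      have hBfin : μ B ≠ ⊤ := ne_top_of_le_ne_top hfin hBm
      have : m < th + μ B := by
        rwa [ENNReal.sub_lt_iff_lt_right hBfin hBm] at hd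
      have h2 : th + (th + th) < th + μ B := by
        rw [← add_assoc, hm3]; exact this
      exact (ENNReal.add_lt_add_iff_left hth_fin).mp h2
  -- the family of small subsets
  set Fam : Set (Set Ω) := {B | B ⊆ s ∧ MeasurableSet B ∧ μ B < th} with hFam
  set c := sSup (μ '' Fam) with hc
  have hempty : (∅ : Set Ω) ∈ Fam := ⟨empty_subset s, MeasurableSet.empty, by simpa using hth_pos⟩
  have hc_le : c ≤ th := sSup_le (by rintro r ⟨B, hB, rfl⟩; exact hB.2.2.le)
  have hc_fin : c ≠ ⊤ := ne_top_of_le_ne_top hth_fin hc_le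
  have hunion : ∀ B B', B ∈ Fam → B' ∈ Fam → B ∪ B' ∈ Fam := by
    intro B B' hB hB'
    refine ⟨union_subset hB.1 hB'.1, hB.2.1.union hB'.2.1, ?_⟩
    rcases dich (B ∪ B') (union_subset hB.1 hB'.1) (hB.2.1.union hB'.2.1) with h | h
    · exact h
    · exfalso
      have : μ (B ∪ B') ≤ μ B + μ B' := measure_union_le B B'
      have h2 : μ (B ∪ B') < th + th := lt_of_le_of_lt this (ENNReal.add_lt_add hB.2.2 hB'.2.2)
      exact absurd (h.trans h2) (lt_irrefl _)
  -- attain the sup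
  have hU : ∃ U, U ∈ Fam ∧ μ U = c := by
    rcases eq_or_ne c 0 with hc0 | hc0
    · exact ⟨∅, hempty, by simp [hc0]⟩
    · have happrox : ∀ n : ℕ, ∃ B, B ∈ Fam ∧ c - ((n : ℝ≥0∞) + 1)⁻¹ < μ B := by
        intro n
        have hlt : c - ((n : ℝ≥0∞) + 1)⁻¹ < c :=
          ENNReal.sub_lt_self hc_fin hc0 (by simp)
        rw [hc, lt_sSup_iff] at hlt
        obtain ⟨r, ⟨B, hB, rfl⟩, hr⟩ := hlt
        exact ⟨B, hB, hr⟩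
      choose B hBmem hBlt using happrox
      set U' : ℕ → Set Ω := fun n => ⋃ k ∈ Finset.range (n + 1), B k with hU'
      have hU'mem : ∀ n, U' n ∈ Fam := by
        intro n
        induction n with
        | zero => simpa [hU'] using hBmem 0
        | succ n ih =>
          have : U' (n + 1) = U' n ∪ B (n + 1) := by
            simp only [hU']
            rw [Finset.range_add_one, Finset.set_biUnion_insert]
            exact union_comm _ _
          rw [this]
          exact hunion _ _ ih (hBmem (n + 1))
      have hmono : Monotone U' := by
        intro a b hab
        exact biUnion_subset_biUnion_left (Finset.coe_subset.mpr (Finset.range_subset_range.mpr (by omega)))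
      set U := ⋃ n, U' n with hUdef
      have hUm : MeasurableSet U := MeasurableSet.iUnion (fun n => (hU'mem n).2.1)
      have hUs : U ⊆ s := iUnion_subset (fun n => (hU'mem n).1)
      have hμU : μ U = ⨆ n, μ (U' n) := hmono.measure_iUnion
      have hle1 : μ U ≤ c := by
        rw [hμU]
        exact iSup_le fun n => le_sSup ⟨U' n, hU'mem n, rfl⟩
      have hge1 : c ≤ μ U := by
        apply ENNReal.le_of_forall_pos_le_add
        intro ε hε _
        obtain ⟨n, hn⟩ := ENNReal.exists_inv_nat_lt (by exact_mod_cast hε.ne' : (ε : ℝ≥0∞) ≠ 0)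
        have hBU : B n ⊆ U := by
          have h1 : B n ⊆ U' n :=
            subset_biUnion_of_mem (Finset.mem_coe.mpr (Finset.self_mem_range_succ n))
          exact h1.trans (subset_iUnion U' n)
        have h1 : c - ((n : ℝ≥0∞) + 1)⁻¹ < μ U :=
          lt_of_lt_of_le (hBlt n) (measure_mono hBU)
        have h2 : c ≤ μ U + ((n : ℝ≥0∞) + 1)⁻¹ :=
          le_trans le_tsub_add (add_le_add_left h1.le _)
        refine h2.trans (add_le_add_right ?_ _)
        calc ((n : ℝ≥0∞) + 1)⁻¹ ≤ (n : ℝ≥0∞)⁻¹ := ENNReal.inv_le_inv.mpr (by simp)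
          _ ≤ ε := hn.le
      refine ⟨U, ⟨hUs, hUm, ?_⟩, le_antisymm hle1 hge1⟩
      rcases dich U hUs hUm with h | h
      · exact h
      · exfalso
        have h1 : μ U ≤ th := (le_antisymm hle1 hge1).trans_le hc_le
        exact absurd (h.trans_le h1) (not_lt.mpr le_add_self)
  obtain ⟨U, hUmem, hUc⟩ := hU
  have hclt : c < th := hUc ▸ hUmem.2.2
  -- now add a small piece to exceed the sup
  have hsub_pos : μ (s \ U) ≠ 0 := by
    have hdiff : μ (s \ U) = m - μ U :=
      measure_diff hUmem.1 hUmem.2.1.nullMeasurableSet (ne_top_of_le_ne_top hfin (measure_mono hUmem.1))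
    rw [hdiff, hUc]
    intro hzero
    have h1 : m ≤ c := tsub_eq_zero_iff_le.mp hzero
    have h2 : m < th := lt_of_le_of_lt h1 hclt
    rw [← hm3] at h2
    exact absurd h2 (not_lt.mpr le_add_self)
  have hsub_fin : μ (s \ U) ≠ ⊤ := ne_top_of_le_ne_top hfin (measure_mono diff_subset)
  obtain ⟨F, hFsub, hFm, hF0, hFle⟩ := exists_small hna (hs.diff hUmem.2.1) hsub_pos hsub_fin
    (tsub_pos_iff_lt.mpr hclt : 0 < th - c)
  set V := U ∪ F with hV
  have hVs : V ⊆ s := union_subset hUmem.1 (hFsub.trans diff_subset)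
  have hVm : MeasurableSet V := hUmem.2.1.union hFm
  have hdisj : Disjoint U F := disjoint_of_subset_right hFsub disjoint_sdiff_self_right
  have hμV : μ V = c + μ F := by rw [hV, measure_union hdisj hFm, hUc]
  have hVgt : c < μ V := by
    rw [hμV]
    exact ENNReal.lt_add_right hc_fin hF0.ne'
  have hVle : μ V ≤ th := by
    rw [hμV]
    calc c + μ F ≤ c + (th - c) := add_le_add_right hFle _
      _ = th := add_tsub_cancel_of_le hclt.le
  rcases dich V hVs hVm with h | h
  · have : μ V ≤ c := le_sSup ⟨V, ⟨hVs, hVm, h⟩, rfl⟩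
    exact absurd (lt_of_lt_of_le hVgt this) (lt_irrefl _)
  · have : th + th < th := lt_of_lt_of_le h hVle
    exact absurd this (not_lt.mpr le_add_self)

lemma exists_sep_family (hna : ∀ A : Set Ω, ¬ IsMeasAtom μ A) {E : Set Ω}
    (hE : MeasurableSet E) (h0 : μ E ≠ 0) (hfin : μ E ≠ ⊤) :
    ∃ A : ℕ → Set Ω, (∀ n, MeasurableSet (A n)) ∧ (∀ n, A n ⊆ E) ∧
      ∃ b : ℝ≥0∞, 0 < b ∧ ∀ m n, m < n → b ≤ μ (A m \ A n) := by
  classical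
  -- the splitting function
  set sp : Set Ω → Set Ω := fun t =>
    if h : MeasurableSet t ∧ μ t ≠ 0 ∧ μ t ≠ ⊤ then
      (split_third hna h.1 h.2.1 h.2.2).choose else ∅ with hsp_def
  have sp_sub : ∀ t, sp t ⊆ t := by
    intro t
    by_cases h : MeasurableSet t ∧ μ t ≠ 0 ∧ μ t ≠ ⊤
    · simp only [hsp_def, dif_pos h]
      exact (split_third hna h.1 h.2.1 h.2.2).choose_spec.1
    · simp only [hsp_def, dif_neg h]
      exact empty_subset t
  have sp_meas : ∀ t, MeasurableSet (sp t) := by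
    intro t
    by_cases h : MeasurableSet t ∧ μ t ≠ 0 ∧ μ t ≠ ⊤
    · simp only [hsp_def, dif_pos h]
      exact (split_third hna h.1 h.2.1 h.2.2).choose_spec.2.1
    · simp only [hsp_def, dif_neg h]
      exact MeasurableSet.empty
  have sp_bound : ∀ t, MeasurableSet t → μ t ≠ 0 → μ t ≠ ⊤ →
      μ t / 3 ≤ μ (sp t) ∧ μ t / 3 ≤ μ (t \ sp t) := by
    intro t h1 h2 h3
    have h : MeasurableSet t ∧ μ t ≠ 0 ∧ μ t ≠ ⊤ := ⟨h1, h2, h3⟩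
    simp only [hsp_def, dif_pos h]
    exact ⟨(split_third hna h.1 h.2.1 h.2.2).choose_spec.2.2.1,
      (split_third hna h.1 h.2.1 h.2.2).choose_spec.2.2.2⟩
  -- the dyadic tree
  set p : ℕ → ℕ → Set Ω := fun n =>
    Nat.rec (motive := fun _ => ℕ → Set Ω) (fun i => if i = 0 then E else (∅ : Set Ω))
      (fun _ q i => if i % 2 = 0 then sp (q (i / 2)) else q (i / 2) \ sp (q (i / 2))) n
    with hp_def
  have hp0 : ∀ i, p 0 i = if i = 0 then E else ∅ := fun _ => rfl
  have hpsucc : ∀ n i, p (n+1) i =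
      if i % 2 = 0 then sp (p n (i/2)) else p n (i/2) \ sp (p n (i/2)) := fun _ _ => rfl
  have heven : ∀ n i, p (n+1) (2*i) = sp (p n i) := by
    intro n i
    rw [hpsucc]
    have h1 : (2*i) % 2 = 0 := by omega
    have h2 : (2*i) / 2 = i := by omega
    rw [if_pos h1, h2]
  have hodd : ∀ n i, p (n+1) (2*i+1) = p n i \ sp (p n i) := by
    intro n i
    rw [hpsucc]
    have h1 : (2*i+1) % 2 ≠ 0 := by omega
    have h2 : (2*i+1) / 2 = i := by omega
    rw [if_neg h1, h2]
  have psub : ∀ n i, p (n+1) i ⊆ p n (i / 2) := by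
    intro n i
    rw [hpsucc]
    split
    · exact sp_sub _
    · exact diff_subset
  have pE : ∀ n i, p n i ⊆ E := by
    intro n
    induction n with
    | zero =>
      intro i
      rw [hp0]
      split
      · exact subset_rfl
      · exact empty_subset _
    | succ n ih => exact fun i => (psub n i).trans (ih _)
  have pmeas : ∀ n i, MeasurableSet (p n i) := by
    intro n
    induction n with
    | zero =>
      intro i
      rw [hp0]
      split
      · exact hE
      · exact MeasurableSet.empty
    | succ n ih =>
      intro i
      rw [hpsucc]
      split
      · exact sp_meas _
      · exact (ih _).diff (sp_meas _)
  have pfin : ∀ n i, μ (p n i) ≠ ⊤ := fun n i => ne_top_of_le_ne_top hfin (measure_mono (pE n i))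
  have ppos : ∀ n, ∀ i, i < 2^n → μ (p n i) ≠ 0 := by
    intro n
    induction n with
    | zero =>
      intro i hi
      interval_cases i
      · rw [hp0, if_pos rfl]; exact h0
    | succ n ih =>
      intro i hi
      have h2 : (2:ℕ)^(n+1) = 2 * 2^n := by ring
      have hj : i / 2 < 2^n := by omega
      have hparent := ih (i/2) hj
      have hbnd := sp_bound (p n (i/2)) (pmeas n (i/2)) hparent (pfin n (i/2))
      have hdiv : μ (p n (i/2)) / 3 ≠ 0 := by
        simp only [ne_eq, ENNReal.div_eq_zero_iff, not_or]
        exact ⟨hparent, by norm_num⟩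
      rw [hpsucc]
      split
      · exact fun hc => hdiv (le_antisymm (hc ▸ hbnd.1) zero_le)
      · exact fun hc => hdiv (le_antisymm (hc ▸ hbnd.2) zero_le)
  have pthird : ∀ n i, i < 2^n →
      μ (p n i) / 3 ≤ μ (p (n+1) (2*i)) ∧ μ (p n i) / 3 ≤ μ (p (n+1) (2*i+1)) := by
    intro n i hi
    rw [heven, hodd]
    exact sp_bound _ (pmeas n i) (ppos n i hi) (pfin n i)
  have pdisj : ∀ n, ∀ i j, i < 2^n → j < 2^n → i ≠ j → Disjoint (p n i) (p n j) := by
    intro n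
    induction n with
    | zero => intro i j hi hj hij; omega
    | succ n ih =>
      intro i j hi hj hij
      have h2 : (2:ℕ)^(n+1) = 2 * 2^n := by ring
      by_cases hpar : i / 2 = j / 2
      · have key : ∀ a b : ℕ, a % 2 = 0 → b % 2 ≠ 0 → a / 2 = b / 2 →
            Disjoint (p (n+1) a) (p (n+1) b) := by
          intro a b ha hb hab
          rw [hpsucc, hpsucc, if_pos ha, if_neg hb, hab]
          exact disjoint_sdiff_right
        rcases Nat.mod_two_eq_zero_or_one i with hi2 | hi2
        · exact key i j hi2 (by omega) hpar
        · rcases Nat.mod_two_eq_zero_or_one j with hj2 | hj2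
          · exact (key j i hj2 (by omega) hpar.symm).symm
          · exact absurd hpar (by omega)
      · exact (ih (i/2) (j/2) (by omega) (by omega) hpar).mono (psub n i) (psub n j)
  have hpart : ∀ n i, p (n+1) (2*i) ∪ p (n+1) (2*i+1) = p n i := by
    intro n i
    rw [heven, hodd]
    exact union_diff_cancel (sp_sub _)
  have hchild_disj : ∀ n i, Disjoint (p (n+1) (2*i)) (p (n+1) (2*i+1)) := by
    intro n i
    rw [heven, hodd]
    exact disjoint_sdiff_right
  -- the Rademacher-type sets
  set A : ℕ → Set Ω := fun n => ⋃ i ∈ Finset.range (2^n), p (n+1) (2*i+1) with hA_def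
  have Ameas : ∀ n, MeasurableSet (A n) :=
    fun n => (Finset.range (2^n)).measurableSet_biUnion (fun i _ => pmeas (n+1) (2*i+1))
  have AsubE : ∀ n, A n ⊆ E := by
    intro n
    apply iUnion₂_subset
    intro i _
    exact pE (n+1) (2*i+1)
  -- key intersection lemma
  have hkey : ∀ d k j, j < 2^k →
      μ (p k j) / 3 ≤ μ (p k j ∩ A (k + d)) ∧ μ (p k j) / 3 ≤ μ (p k j \ A (k + d)) := by
    intro d
    induction d with
    | zero =>
      intro k j hj
      have hmemA : ∀ x, x ∈ A k ↔ ∃ i, i < 2^k ∧ x ∈ p (k+1) (2*i+1) := by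
        intro x
        simp only [hA_def, mem_iUnion, Finset.mem_range, exists_prop]
      have h1 : p k j ∩ A k = p (k+1) (2*j+1) := by
        apply subset_antisymm
        · rintro x ⟨hxj, hxA⟩
          obtain ⟨i, hi, hxi⟩ := (hmemA x).mp hxA
          have hij : i = j := by
            by_contra hne
            have hxpi : x ∈ p k i := by
              have := psub k (2*i+1) hxi
              rwa [show (2*i+1)/2 = i by omega] at this
            exact Set.disjoint_left.mp (pdisj k i j hi hj hne) hxpi hxj
          rwa [hij] at hxi
        · intro x hx
          have hxj : x ∈ p k j := by
            have := psub k (2*j+1) hx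
            rwa [show (2*j+1)/2 = j by omega] at this
          exact ⟨hxj, (hmemA x).mpr ⟨j, hj, hx⟩⟩
      have h2 : p k j \ A k = p (k+1) (2*j) := by
        apply subset_antisymm
        · rintro x ⟨hxj, hxA⟩
          have hxu : x ∈ p (k+1) (2*j) ∪ p (k+1) (2*j+1) := (hpart k j).symm ▸ hxj
          rcases hxu with hx | hx
          · exact hx
          · exact absurd ((hmemA x).mpr ⟨j, hj, hx⟩) hxA
        · intro x hx
          have hxj : x ∈ p k j := (hpart k j) ▸ (mem_union_left _ hx)
          refine ⟨hxj, fun hxA => ?_⟩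
          obtain ⟨i, hi, hxi⟩ := (hmemA x).mp hxA
          have hij : i = j := by
            by_contra hne
            have hxpi : x ∈ p k i := by
              have := psub k (2*i+1) hxi
              rwa [show (2*i+1)/2 = i by omega] at this
            exact Set.disjoint_left.mp (pdisj k i j hi hj hne) hxpi hxj
          rw [hij] at hxi
          exact Set.disjoint_left.mp (hchild_disj k j) hx hxi
      rw [Nat.add_zero, h1, h2]
      exact ⟨(pthird k j hj).2, (pthird k j hj).1⟩
    | succ d ih =>
      intro k j hj
      have h2 : (2:ℕ)^(k+1) = 2 * 2^k := by ring
      have hkd : k + (d+1) = (k+1) + d := by omega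
      rw [hkd]
      have h0c := ih (k+1) (2*j) (by omega)
      have h1c := ih (k+1) (2*j+1) (by omega)
      have hd := hchild_disj k j
      have hu := hpart k j
      have hsum : μ (p (k+1) (2*j)) + μ (p (k+1) (2*j+1)) = μ (p k j) := by
        rw [← measure_union hd (pmeas (k+1) (2*j+1)), hu]
      constructor
      · have hset : p k j ∩ A ((k+1)+d) =
            (p (k+1) (2*j) ∩ A ((k+1)+d)) ∪ (p (k+1) (2*j+1) ∩ A ((k+1)+d)) := by
          rw [← hu, union_inter_distrib_right]
        rw [hset, measure_union (hd.mono inter_subset_left inter_subset_left)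
          ((pmeas (k+1) (2*j+1)).inter (Ameas ((k+1)+d)))]
        calc μ (p k j) / 3
            = (μ (p (k+1) (2*j)) + μ (p (k+1) (2*j+1))) / 3 := by rw [hsum]
          _ = μ (p (k+1) (2*j)) / 3 + μ (p (k+1) (2*j+1)) / 3 := by
              rw [ENNReal.div_add_div_same]
          _ ≤ _ := add_le_add h0c.1 h1c.1
      · have hset : p k j \ A ((k+1)+d) =
            (p (k+1) (2*j) \ A ((k+1)+d)) ∪ (p (k+1) (2*j+1) \ A ((k+1)+d)) := by
          rw [← hu, union_diff_distrib]
        rw [hset, measure_union (hd.mono diff_subset diff_subset)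
          ((pmeas (k+1) (2*j+1)).diff (Ameas ((k+1)+d)))]
        calc μ (p k j) / 3
            = (μ (p (k+1) (2*j)) + μ (p (k+1) (2*j+1))) / 3 := by rw [hsum]
          _ = μ (p (k+1) (2*j)) / 3 + μ (p (k+1) (2*j+1)) / 3 := by
              rw [ENNReal.div_add_div_same]
          _ ≤ _ := add_le_add h0c.2 h1c.2
  -- measure of A n is at least μ E / 3
  have hAmeasure : ∀ n, μ E / 3 ≤ μ (A n) := by
    intro n
    have := (hkey n 0 0 (by norm_num)).1
    rw [hp0, if_pos rfl, Nat.zero_add] at this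
    rwa [inter_eq_self_of_subset_right (AsubE n)] at this
  refine ⟨A, Ameas, AsubE, μ E / 3 / 3, ?_, ?_⟩
  · apply ENNReal.div_pos _ (by norm_num)
    simp only [ne_eq, ENNReal.div_eq_zero_iff, not_or]
    exact ⟨h0, by norm_num⟩
  · intro m n hmn
    have hdecomp : A m \ A n = ⋃ i ∈ Finset.range (2^m), (p (m+1) (2*i+1) \ A n) := by
      simp only [hA_def]
      ext x
      simp [mem_iUnion, mem_diff]
      tauto
    have hpd : (↑(Finset.range (2^m)) : Set ℕ).PairwiseDisjoint
        (fun i => p (m+1) (2*i+1) \ A n) := by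
      intro i hi j hj hij
      simp only [Finset.coe_range, mem_Iio] at hi hj
      have h2 : (2:ℕ)^(m+1) = 2 * 2^m := by ring
      exact (pdisj (m+1) (2*i+1) (2*j+1) (by omega) (by omega) (by omega)).mono
        diff_subset diff_subset
    rw [hdecomp, measure_biUnion_finset hpd (fun i _ => (pmeas (m+1) (2*i+1)).diff (Ameas n))]
    have hterm : ∀ i ∈ Finset.range (2^m), μ (p (m+1) (2*i+1)) / 3 ≤ μ (p (m+1) (2*i+1) \ A n) := by
      intro i hi
      simp only [Finset.mem_range] at hi
      have h2 : (2:ℕ)^(m+1) = 2 * 2^m := by ring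
      have := (hkey (n - (m+1)) (m+1) (2*i+1) (by omega)).2
      rwa [show (m+1) + (n - (m+1)) = n by omega] at this
    calc μ E / 3 / 3 ≤ μ (A m) / 3 := by
          exact ENNReal.div_le_div_right (hAmeasure m) 3
      _ = (∑ i ∈ Finset.range (2^m), μ (p (m+1) (2*i+1))) / 3 := by
          rw [measure_biUnion_finset ?_ (fun i _ => pmeas (m+1) (2*i+1))]
          · intro i hi j hj hij
            simp only [Finset.coe_range, mem_Iio] at hi hj
            have h2 : (2:ℕ)^(m+1) = 2 * 2^m := by ring
            exact pdisj (m+1) (2*i+1) (2*j+1) (by omega) (by omega) (by omega)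
      _ = ∑ i ∈ Finset.range (2^m), μ (p (m+1) (2*i+1)) / 3 := by
          simp only [div_eq_mul_inv, Finset.sum_mul]
      _ ≤ ∑ i ∈ Finset.range (2^m), μ (p (m+1) (2*i+1) \ A n) := Finset.sum_le_sum hterm


lemma luxNorm_le_one {Φ : ℝ → ℝ} {f : Ω → ℂ}
    (h : orliczModular Φ μ (fun x => f x / (1:ℂ)) ≤ 1) : luxNorm Φ μ f ≤ 1 :=
  csInf_le ⟨0, fun k hk => hk.1.le⟩ ⟨one_pos, h⟩

lemma le_luxNorm {Φ : ℝ → ℝ} {f : Ω → ℂ} {L : ℝ}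
    (hne : {k : ℝ | 0 < k ∧ orliczModular Φ μ (fun x => f x / (k:ℂ)) ≤ 1}.Nonempty)
    (hlb : ∀ k : ℝ, 0 < k → orliczModular Φ μ (fun x => f x / (k:ℂ)) ≤ 1 → L ≤ k) :
    L ≤ luxNorm Φ μ f :=
  le_csInf hne (fun k hk => hlb k hk.1 hk.2)

lemma modular_indicator {Φ : ℝ → ℝ} (hΦ : IsYoung Φ) {A : Set Ω} (hA : MeasurableSet A)
    {r : ℝ} (hr : 0 ≤ r) :
    orliczModular Φ μ (A.indicator (fun _ => ((r:ℝ):ℂ))) = ENNReal.ofReal (Φ r) * μ A := by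
  rw [orliczModular]
  have heq : ∀ x, ENNReal.ofReal (Φ (‖A.indicator (fun _ => ((r:ℝ):ℂ)) x‖)) =
      A.indicator (fun _ => ENNReal.ofReal (Φ r)) x := by
    intro x
    by_cases hx : x ∈ A
    · simp [hx, abs_of_nonneg hr]
    · simp [hx, young_zero hΦ]
  simp_rw [heq]
  rw [lintegral_indicator_const hA]

end Stmt11Aux

/-- On a non-atomic measure space there is no nonzero compact multiplication operator:
compactness of `M_u` forces `u = 0` a.e. -/
theorem stmt11 {Ω : Type*} [MeasurableSpace Ω] (μ : Measure Ω) [SigmaFinite μ]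
    (hna : ∀ A : Set Ω, ¬ IsMeasAtom μ A)
    (Φ₁ Φ₂ : ℝ → ℝ) (hΦ₁ : IsYoung Φ₁) (hΦ₂ : IsYoung Φ₂)
    (u : Ω → ℂ) (hu : Measurable u)
    (C : ℝ) (hC : 0 ≤ C)
    (hbdd : ∀ f : Ω → ℂ, MemOrlicz Φ₁ μ f →
      MemOrlicz Φ₂ μ (fun x => u x * f x) ∧
      luxNorm Φ₂ μ (fun x => u x * f x) ≤ C * luxNorm Φ₁ μ f)
    (hcpt : CompactOp Φ₁ Φ₂ μ (fun f x => u x * f x)) :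
    u =ᵐ[μ] (fun _ => (0 : ℂ)) := by
  by_contra hne
  rw [Filter.EventuallyEq, MeasureTheory.ae_iff] at hne
  -- Step 1: find δ and E with E ⊆ {δ ≤ |u|}, 0 < μ E < ∞
  set S : ℕ → Set Ω := fun n => {x | 1/((n:ℝ)+1) ≤ ‖u x‖} with hS
  have habs_meas : Measurable fun x => ‖u x‖ :=
    continuous_norm.measurable.comp hu
  have hSmeas : ∀ n, MeasurableSet (S n) := fun n => habs_meas measurableSet_Ici
  have hcover : {x | ¬ u x = (fun _ => (0:ℂ)) x} ⊆ ⋃ n, S n := by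
    intro x hx
    have habs : 0 < ‖u x‖ := by
      simp only [mem_setOf_eq] at hx
      exact norm_pos_iff.mpr hx
    obtain ⟨n, hn⟩ := exists_nat_one_div_lt habs
    exact mem_iUnion.mpr ⟨n, hn.le⟩
  have hex : ∃ n, μ (S n) ≠ 0 := by
    by_contra hall
    push_neg at hall
    exact hne (measure_mono_null hcover (measure_iUnion_null hall))
  obtain ⟨n₀, hn₀⟩ := hex
  set δ : ℝ := 1/((n₀:ℝ)+1) with hδ
  have hδpos : 0 < δ := by positivity
  obtain ⟨E, hEmeas, hEsub, hE0, hEfin⟩ :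
      ∃ E, MeasurableSet E ∧ E ⊆ S n₀ ∧ 0 < μ E ∧ μ E < ⊤ :=
    Measure.exists_subset_measure_lt_top (hSmeas n₀) (pos_iff_ne_zero.mpr hn₀)
  -- Step 2: separated family
  obtain ⟨A, hAmeas, hAsub, b, hb_pos, hb⟩ := exists_sep_family hna hEmeas hE0.ne' hEfin.ne
  have hb_fin : b ≠ ⊤ :=
    ne_top_of_le_ne_top hEfin.ne ((hb 0 1 one_pos).trans (measure_mono (diff_subset.trans (hAsub 0))))
  -- Step 3: unit-ball sequence
  set a : ℝ := (μ E).toReal with ha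
  have ha_pos : 0 < a := ENNReal.toReal_pos hE0.ne' hEfin.ne
  obtain ⟨c, hc_pos, hc_le⟩ := young_small hΦ₁ (show (0:ℝ) < 1/a by positivity)
  set f : ℕ → Ω → ℂ := fun n => (A n).indicator (fun _ => ((c:ℝ):ℂ)) with hf
  have hfmeas : ∀ n, Measurable (f n) := fun n => measurable_const.indicator (hAmeas n)
  have hmod1 : ∀ n, orliczModular Φ₁ μ (fun x => f n x / (1:ℂ)) ≤ 1 := by
    intro n
    have heq : (fun x => f n x / (1:ℂ)) = (A n).indicator (fun _ => ((c:ℝ):ℂ)) := by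
      funext x; simp [hf]
    rw [heq, modular_indicator hΦ₁ (hAmeas n) hc_pos.le]
    calc ENNReal.ofReal (Φ₁ c) * μ (A n) ≤ ENNReal.ofReal (1/a) * μ E :=
          mul_le_mul' (ENNReal.ofReal_le_ofReal hc_le) (measure_mono (hAsub n))
      _ = 1 := by
          rw [← ENNReal.ofReal_toReal hEfin.ne, ← ha, ← ENNReal.ofReal_mul (by positivity)]
          rw [one_div, inv_mul_cancel₀ ha_pos.ne']
          exact ENNReal.ofReal_one
  have hf_orlicz : ∀ n, MemOrlicz Φ₁ μ (f n) := by
    intro n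
    refine ⟨hfmeas n, 1, one_pos, ?_⟩
    have heq : (fun x => ((1:ℝ):ℂ) * f n x) = (fun x => f n x / (1:ℂ)) := by
      funext x; simp
    calc orliczModular Φ₁ μ (fun x => ((1:ℝ):ℂ) * f n x)
        = orliczModular Φ₁ μ (fun x => f n x / (1:ℂ)) := by rw [heq]
      _ ≤ 1 := hmod1 n
      _ < ⊤ := ENNReal.one_lt_top
  have hf_lux : ∀ n, luxNorm Φ₁ μ (f n) ≤ 1 := fun n => luxNorm_le_one (hmod1 n)
  -- Step 4: uniform separation of images
  set r : ℝ := (b⁻¹).toReal with hr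
  have hr_nonneg : 0 ≤ r := ENNReal.toReal_nonneg
  have hrb : ENNReal.ofReal r = b⁻¹ :=
    ENNReal.ofReal_toReal (ENNReal.inv_ne_top.mpr hb_pos.ne')
  obtain ⟨M, hM_pos, hM⟩ := young_big hΦ₂ r
  set L : ℝ := c * δ / M with hL
  have hL_pos : 0 < L := by positivity
  have claim : ∀ p q : ℕ, p ≠ q →
      L ≤ luxNorm Φ₂ μ (fun x => u x * f p x - u x * f q x) := by
    intro p q hpq
    set D : Ω → ℂ := fun x => u x * f p x - u x * f q x with hD
    have hDmeas : Measurable D := ((hu.mul (hfmeas p)).sub (hu.mul (hfmeas q)))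
    set w := min p q with hw
    set v := max p q with hv
    have hwv : w < v := min_lt_max.mpr hpq
    have habsD : ∀ x ∈ A w \ A v, δ * c ≤ ‖D x‖ := by
      intro x hx
      have hfw : ∀ y, y = w ∨ y = v → (y = w → f y x = ((c:ℝ):ℂ)) ∧ (y = v → f y x = 0) := by
        intro y _
        constructor
        · rintro rfl; exact indicator_of_mem hx.1 _
        · rintro rfl; exact indicator_of_notMem hx.2 _
      have h1 : ‖u x * ((c:ℝ):ℂ)‖ = ‖u x‖ * c := by
        rw [norm_mul, Complex.norm_real, Real.norm_eq_abs, abs_of_nonneg hc_pos.le]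
      have hux : δ ≤ ‖u x‖ := hEsub (hAsub w hx.1)
      have hgoal : ‖D x‖ = ‖u x‖ * c := by
        rcases hpq.lt_or_gt with hlt | hlt
        · have hwp : w = p := min_eq_left hlt.le
          have hvq : v = q := max_eq_right hlt.le
          have hfp : f p x = ((c:ℝ):ℂ) := hwp ▸ indicator_of_mem hx.1 _
          have hfq : f q x = 0 := hvq ▸ indicator_of_notMem hx.2 _
          rw [hD]
          simp only [hfp, hfq, mul_zero, sub_zero]
          exact h1
        · have hwq : w = q := min_eq_right hlt.le
          have hvp : v = p := max_eq_left hlt.le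
          have hfq : f q x = ((c:ℝ):ℂ) := hwq ▸ indicator_of_mem hx.1 _
          have hfp : f p x = 0 := hvp ▸ indicator_of_notMem hx.2 _
          rw [hD]
          simp only [hfp, hfq, mul_zero, zero_sub]
          rw [norm_neg]
          exact h1
      rw [hgoal]
      exact mul_le_mul_of_nonneg_right hux hc_pos.le
    have hμS : b ≤ μ (A w \ A v) := hb w v hwv
    have hSm : MeasurableSet (A w \ A v) := (hAmeas w).diff (hAmeas v)
    -- lower bound for admissible constants
    have hlb : ∀ k : ℝ, 0 < k → orliczModular Φ₂ μ (fun x => D x / (k:ℂ)) ≤ 1 → L ≤ k := by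
      intro k hk hmodk
      by_contra hkL
      push_neg at hkL
      have hMle : M ≤ δ * c / k := by
        rw [le_div_iff₀ hk]
        rw [hL] at hkL
        have h' : k * M < c * δ := (lt_div_iff₀ hM_pos).mp hkL
        nlinarith [h']
      set V : ℝ := Φ₂ (δ * c / k) with hV
      have hrV : r < V := hM _ hMle
      have hpt : ∀ x ∈ A w \ A v,
          ENNReal.ofReal V ≤ ENNReal.ofReal (Φ₂ (‖D x / (k:ℂ)‖)) := by
        intro x hx
        apply ENNReal.ofReal_le_ofReal
        apply young_mono hΦ₂ (by positivity)
        rw [norm_div, Complex.norm_real, Real.norm_eq_abs, abs_of_pos hk]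
        gcongr
        exact habsD x hx
      have hmod_lb : ENNReal.ofReal V * μ (A w \ A v) ≤
          orliczModular Φ₂ μ (fun x => D x / (k:ℂ)) := by
        rw [orliczModular]
        calc ENNReal.ofReal V * μ (A w \ A v)
            = ∫⁻ _ in A w \ A v, ENNReal.ofReal V ∂μ := by
              rw [setLIntegral_const]
          _ ≤ ∫⁻ x in A w \ A v, ENNReal.ofReal (Φ₂ (‖D x / (k:ℂ)‖)) ∂μ :=
              setLIntegral_mono (ENNReal.measurable_ofReal.comp
                ((hΦ₂.1.measurable).comp (continuous_norm.measurable.comp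
                  (hDmeas.div measurable_const)))) hpt
          _ ≤ ∫⁻ x, ENNReal.ofReal (Φ₂ (‖D x / (k:ℂ)‖)) ∂μ :=
              setLIntegral_le_lintegral _ _
      have hgt : (1 : ℝ≥0∞) < orliczModular Φ₂ μ (fun x => D x / (k:ℂ)) := by
        have h1 : (1:ℝ≥0∞) = b⁻¹ * b := (ENNReal.inv_mul_cancel hb_pos.ne' hb_fin).symm
        rw [h1]
        calc b⁻¹ * b = ENNReal.ofReal r * b := by rw [hrb]
          _ < ENNReal.ofReal V * b := by
              apply (ENNReal.mul_lt_mul_iff_left hb_pos.ne' hb_fin).mpr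
              exact (ENNReal.ofReal_lt_ofReal_iff_of_nonneg hr_nonneg).mpr hrV
          _ ≤ ENNReal.ofReal V * μ (A w \ A v) := mul_le_mul_right hμS _
          _ ≤ _ := hmod_lb
      exact absurd (lt_of_lt_of_le hgt hmodk) (lt_irrefl _)
    -- nonemptiness of the admissible set
    have hne_adm : {k : ℝ | 0 < k ∧ orliczModular Φ₂ μ (fun x => D x / (k:ℂ)) ≤ 1}.Nonempty := by
      obtain ⟨hmeas_p, k₁, hk₁, hfin₁⟩ := (hbdd (f p) (hf_orlicz p)).1
      obtain ⟨hmeas_q, k₂, hk₂, hfin₂⟩ := (hbdd (f q) (hf_orlicz q)).1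
      set k0 : ℝ := min k₁ k₂ with hk0def
      have hk0 : 0 < k0 := lt_min hk₁ hk₂
      set X : Ω → ℝ≥0∞ := fun x => ENNReal.ofReal (Φ₂ (‖(k₁:ℂ) * (u x * f p x)‖)) with hX
      set Y : Ω → ℝ≥0∞ := fun x => ENNReal.ofReal (Φ₂ (‖(k₂:ℂ) * (u x * f q x)‖)) with hY
      have hXmeas : Measurable X := ENNReal.measurable_ofReal.comp
        ((hΦ₂.1.measurable).comp (continuous_norm.measurable.comp
          (measurable_const.mul (hu.mul (hfmeas p)))))
      have hYmeas : Measurable Y := ENNReal.measurable_ofReal.comp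
        ((hΦ₂.1.measurable).comp (continuous_norm.measurable.comp
          (measurable_const.mul (hu.mul (hfmeas q)))))
      set I : ℝ≥0∞ := ∫⁻ x, ENNReal.ofReal (Φ₂ (k0/2 * ‖D x‖)) ∂μ with hI
      have hIfin : I < ⊤ := by
        have hpt : ∀ x, ENNReal.ofReal (Φ₂ (k0/2 * ‖D x‖)) ≤
            ENNReal.ofReal (2⁻¹ * Φ₂ (‖(k₁:ℂ) * (u x * f p x)‖)) +
            ENNReal.ofReal (2⁻¹ * Φ₂ (‖(k₂:ℂ) * (u x * f q x)‖)) := by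
          intro x
          set ap := ‖u x * f p x‖ with hap
          set aq := ‖u x * f q x‖ with haq
          have hap0 : 0 ≤ ap := norm_nonneg _
          have haq0 : 0 ≤ aq := norm_nonneg _
          have habs1 : ‖(k₁:ℂ) * (u x * f p x)‖ = k₁ * ap := by
            rw [norm_mul, Complex.norm_real, Real.norm_eq_abs, abs_of_pos hk₁]
          have habs2 : ‖(k₂:ℂ) * (u x * f q x)‖ = k₂ * aq := by
            rw [norm_mul, Complex.norm_real, Real.norm_eq_abs, abs_of_pos hk₂]
          have hDle : ‖D x‖ ≤ ap + aq := by
            rw [hD]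
            exact norm_sub_le _ _
          have step1 : Φ₂ (k0/2 * ‖D x‖) ≤ Φ₂ ((k0 * ap + k0 * aq)/2) := by
            apply young_mono hΦ₂ (by positivity)
            have : k0/2 * ‖D x‖ ≤ k0/2 * (ap + aq) := by
              apply mul_le_mul_of_nonneg_left hDle (by positivity)
            linarith
          have step2 : Φ₂ ((k0 * ap + k0 * aq)/2) ≤ 2⁻¹ * Φ₂ (k0 * ap) + 2⁻¹ * Φ₂ (k0 * aq) := by
            have hco := hΦ₂.2.1.2 (mem_Ici.mpr (by positivity : (0:ℝ) ≤ k0 * ap))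
              (mem_Ici.mpr (by positivity : (0:ℝ) ≤ k0 * aq))
              (by norm_num : (0:ℝ) ≤ 2⁻¹) (by norm_num : (0:ℝ) ≤ 2⁻¹) (by norm_num)
            simp only [smul_eq_mul] at hco
            calc Φ₂ ((k0 * ap + k0 * aq)/2) = Φ₂ (2⁻¹ * (k0 * ap) + 2⁻¹ * (k0 * aq)) := by
                  ring_nf
              _ ≤ _ := hco
          have step3 : Φ₂ (k0 * ap) ≤ Φ₂ (k₁ * ap) :=
            young_mono hΦ₂ (by positivity) (mul_le_mul_of_nonneg_right (min_le_left _ _) hap0)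
          have step4 : Φ₂ (k0 * aq) ≤ Φ₂ (k₂ * aq) :=
            young_mono hΦ₂ (by positivity) (mul_le_mul_of_nonneg_right (min_le_right _ _) haq0)
          calc ENNReal.ofReal (Φ₂ (k0/2 * ‖D x‖))
              ≤ ENNReal.ofReal (2⁻¹ * Φ₂ (k₁ * ap) + 2⁻¹ * Φ₂ (k₂ * aq)) := by
                apply ENNReal.ofReal_le_ofReal
                calc Φ₂ (k0/2 * ‖D x‖) ≤ 2⁻¹ * Φ₂ (k0 * ap) + 2⁻¹ * Φ₂ (k0 * aq) :=
                      step1.trans step2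
                  _ ≤ _ := by
                      have := hΦ₂.2.2.1
                      nlinarith [step3, step4]
            _ ≤ _ := by
                rw [habs1, habs2]
                exact ENNReal.ofReal_add_le
        calc I ≤ ∫⁻ x, (ENNReal.ofReal (2⁻¹ * Φ₂ (‖(k₁:ℂ) * (u x * f p x)‖)) +
                ENNReal.ofReal (2⁻¹ * Φ₂ (‖(k₂:ℂ) * (u x * f q x)‖))) ∂μ :=
              lintegral_mono hpt
          _ = ∫⁻ x, ENNReal.ofReal (2⁻¹ * Φ₂ (‖(k₁:ℂ) * (u x * f p x)‖)) ∂μ +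
              ∫⁻ x, ENNReal.ofReal (2⁻¹ * Φ₂ (‖(k₂:ℂ) * (u x * f q x)‖)) ∂μ := by
              apply lintegral_add_left
              exact ENNReal.measurable_ofReal.comp ((measurable_const.mul
                ((hΦ₂.1.measurable).comp (continuous_norm.measurable.comp
                  (measurable_const.mul (hu.mul (hfmeas p)))))) )
          _ < ⊤ := by
              have e1 : ∀ x, ENNReal.ofReal (2⁻¹ * Φ₂ (‖(k₁:ℂ) * (u x * f p x)‖)) =
                  ENNReal.ofReal 2⁻¹ * X x := by
                intro x
                rw [hX, ← ENNReal.ofReal_mul (by norm_num)]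
              have e2 : ∀ x, ENNReal.ofReal (2⁻¹ * Φ₂ (‖(k₂:ℂ) * (u x * f q x)‖)) =
                  ENNReal.ofReal 2⁻¹ * Y x := by
                intro x
                rw [hY, ← ENNReal.ofReal_mul (by norm_num)]
              simp_rw [e1, e2]
              rw [lintegral_const_mul _ hXmeas, lintegral_const_mul _ hYmeas]
              have hfin₁' : ∫⁻ x, X x ∂μ < ⊤ := hfin₁
              have hfin₂' : ∫⁻ x, Y x ∂μ < ⊤ := hfin₂
              apply ENNReal.add_lt_top.mpr
              constructor
              · exact ENNReal.mul_lt_top ENNReal.ofReal_lt_top hfin₁'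
              · exact ENNReal.mul_lt_top ENNReal.ofReal_lt_top hfin₂'
      obtain ⟨j, hj⟩ := ENNReal.exists_nat_gt hIfin.ne
      set K : ℝ := 2 * ((j:ℝ)+1) / k0 with hK
      have hK_pos : 0 < K := by positivity
      refine ⟨K, hK_pos, ?_⟩
      have hpt2 : ∀ x, ENNReal.ofReal (Φ₂ (‖D x / (K:ℂ)‖)) ≤
          ENNReal.ofReal (((j:ℝ)+1)⁻¹) * ENNReal.ofReal (Φ₂ (k0/2 * ‖D x‖)) := by
        intro x
        have habs : ‖D x / (K:ℂ)‖ = ((j:ℝ)+1)⁻¹ * (k0/2 * ‖D x‖) := by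
          rw [norm_div, Complex.norm_real, Real.norm_eq_abs, abs_of_pos hK_pos, hK]
          field_simp
        rw [habs, ← ENNReal.ofReal_mul (by positivity)]
        apply ENNReal.ofReal_le_ofReal
        exact young_scale hΦ₂ (by positivity)
          (by rw [inv_le_one_iff₀]; right; push_cast; linarith) (by positivity)
      calc orliczModular Φ₂ μ (fun x => D x / (K:ℂ))
          ≤ ∫⁻ x, ENNReal.ofReal (((j:ℝ)+1)⁻¹) * ENNReal.ofReal (Φ₂ (k0/2 * ‖D x‖)) ∂μ := by
            rw [orliczModular]
            exact lintegral_mono hpt2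
        _ = ENNReal.ofReal (((j:ℝ)+1)⁻¹) * I := by
            rw [hI, lintegral_const_mul' _ _ ENNReal.ofReal_ne_top]
        _ ≤ 1 := by
            have hcast : ENNReal.ofReal ((j:ℝ)+1) = ((j:ℕ):ℝ≥0∞) + 1 := by
              rw [ENNReal.ofReal_add (by positivity) zero_le_one, ENNReal.ofReal_natCast,
                ENNReal.ofReal_one]
            have hIle : I ≤ ((j:ℕ):ℝ≥0∞) + 1 := hj.le.trans le_self_add
            calc ENNReal.ofReal (((j:ℝ)+1)⁻¹) * I
                ≤ ENNReal.ofReal (((j:ℝ)+1)⁻¹) * (((j:ℕ):ℝ≥0∞) + 1) := mul_le_mul_right hIle _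
              _ = 1 := by
                  rw [ENNReal.ofReal_inv_of_pos (by positivity), hcast]
                  exact ENNReal.inv_mul_cancel (by simp) (by simp)
    exact le_luxNorm hne_adm hlb
  -- Step 5: contradiction with compactness
  obtain ⟨g, hg, hcauchy⟩ := hcpt f (fun n => ⟨hf_orlicz n, hf_lux n⟩)
  obtain ⟨N, hN⟩ := hcauchy (L/2) (by positivity)
  have h1 : luxNorm Φ₂ μ (fun x => u x * f (g N) x - u x * f (g (N+1)) x) ≤ L/2 :=
    hN N le_rfl (N+1) (by omega)
  have h2 : L ≤ luxNorm Φ₂ μ (fun x => u x * f (g N) x - u x * f (g (N+1)) x) :=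
    claim (g N) (g (N+1)) (hg (by omega : N < N+1)).ne
  linarith
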